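/- arXiv:math/0005166 — 2 statements merged into one kernel-verified Lean document; each statement's English description precedes it below -/
import Mathlib

section
/- Let H be a complex Hilbert space and let T, S : H → H be (not necessarily linear or continuous) maps satisfying |⟨Tx, Sy⟩| = |⟨x, y⟩| for all x, y ∈ H, with S almost surjective. Then for every nonzero x ∈ H and every nonzero λ ∈ ℂ, the vector T(λx) is a nonzero scalar multiple of Tx, i.e. T(λx) = λ' Tx for some λ' ∈ ℂ, λ' ≠ 0. -/
/-
STATEMENT 6: If |⟨Tx, Sy⟩| = |⟨x, y⟩| with S almost surjective, then T maps
scalar multiples of a nonzero vector to nonzero scalar multiples of its image.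
-/

local notation "⟪" x ", " y "⟫" => @inner ℂ _ _ x y

/-- A map `S` is almost surjective if every vector is a unimodular multiple of some `S x`. -/
def AlmostSurjective {H : Type*} [NormedAddCommGroup H] [InnerProductSpace ℂ H]
    (S : H → H) : Prop :=
  ∀ y : H, ∃ (x : H) (c : ℂ), ‖c‖ = 1 ∧ y = c • S x

theorem image_of_scalar_multiple
    {H : Type*} [NormedAddCommGroup H] [InnerProductSpace ℂ H] [CompleteSpace H]
    (T S : H → H)
    (h : ∀ x y : H, ‖⟪T x, S y⟫‖ = ‖⟪x, y⟫‖)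
    (hS : AlmostSurjective S) :
    ∀ x : H, x ≠ 0 → ∀ c : ℂ, c ≠ 0 → ∃ c' : ℂ, c' ≠ 0 ∧ T (c • x) = c' • T x := by
  intro x hx c hc
  -- T (c • x) is orthogonal to everything orthogonal to T x
  have key : T (c • x) ∈ (ℂ ∙ T x)ᗮᗮ := by
    intro v hv
    have hTxv : ⟪T x, v⟫ = 0 := hv (T x) (Submodule.mem_span_singleton_self _)
    obtain ⟨w, lam, hlam, rfl⟩ := hS v
    have h1 : ⟪T x, S w⟫ = 0 := by
      have : lam * ⟪T x, S w⟫ = 0 := by rw [← inner_smul_right]; exact hTxv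
      rcases mul_eq_zero.mp this with h' | h'
      · exact absurd h' (by intro h0; simp [h0] at hlam)
      · exact h'
    have h2 : ⟪x, w⟫ = 0 := by
      have := h x w
      rw [h1] at this
      rw [norm_zero] at this; exact norm_eq_zero.mp this.symm
    have h3 : ⟪T (c • x), S w⟫ = 0 := by
      have := h (c • x) w
      rw [inner_smul_left, h2, mul_zero] at this
      rw [norm_zero] at this; exact norm_eq_zero.mp this
    rw [inner_smul_left, ← inner_conj_symm, h3, map_zero, mul_zero]
  have hclosed : (ℂ ∙ T x)ᗮᗮ = (ℂ ∙ T x) := Submodule.orthogonal_orthogonal _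
  rw [hclosed, Submodule.mem_span_singleton] at key
  obtain ⟨c', hc'⟩ := key
  refine ⟨c', ?_, hc'.symm⟩
  -- c' ≠ 0 since T (c • x) ≠ 0
  intro h0
  have hTcx : T (c • x) = 0 := by rw [← hc', h0, zero_smul]
  have := h (c • x) x
  rw [hTcx, inner_zero_left, inner_smul_left] at this
  simp only [norm_zero, norm_mul, RCLike.norm_conj] at this
  have hx2 : ⟪x, x⟫ ≠ 0 := inner_self_ne_zero.mpr hx
  have : ‖c‖ * ‖⟪x, x⟫‖ = 0 := this.symm
  rcases mul_eq_zero.mp this with h' | h'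
  · exact hc (norm_eq_zero.mp h')
  · exact hx2 (norm_eq_zero.mp h')
end

section
/- Let H be a complex Hilbert space and let T, S : H → H be maps satisfying |⟨Tx, Sy⟩| = |⟨x, y⟩| for all x, y ∈ H and ⟨Tx, Sx⟩ = 1 for every unit vector x ∈ H, with S almost surjective. Let x₁, …, xₙ and x₁', …, xₙ' be two orthonormal systems in H spanning the same n-dimensional subspace. Then Σₖ Txₖ ⊗ Sxₖ = Σₖ Txₖ' ⊗ Sxₖ'; moreover this operator is an idempotent of rank n whose range is the linear span of Tx₁, …, Txₙ and whose kernel is the orthogonal complement of the linear span of Sx₁, …, Sxₙ. -/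
/-
STATEMENT 7: Well-definedness of the measure μ: for two orthonormal systems
spanning the same subspace, Σ Txₖ ⊗ Sxₖ = Σ Txₖ' ⊗ Sxₖ', and this operator is a
rank-n idempotent with range span{Txₖ} and kernel (span{Sxₖ})^⊥.
-/

local notation "⟪" x ", " y "⟫" => @inner ℂ _ _ x y

/-- The rank-one operator `x ⊗ y` given by `(x ⊗ y) z = ⟨z, y⟩ x`
(in the Mathlib convention, `z ↦ ⟪y, z⟫ • x`, linear in `z`). -/
noncomputable def rankOne {H : Type*} [NormedAddCommGroup H] [InnerProductSpace ℂ H]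
    (x y : H) : H →ₗ[ℂ] H where
  toFun z := ⟪y, z⟫ • x
  map_add' a b := by simp [inner_add_right, add_smul]
  map_smul' c a := by simp [inner_smul_right, mul_smul]

section Aux

variable {H : Type*} [NormedAddCommGroup H] [InnerProductSpace ℂ H] [CompleteSpace H]
  {T S : H → H}

@[simp] lemma rankOne_apply (x y z : H) : rankOne x y z = ⟪y, z⟫ • x := rfl

lemma aux_orth (h : ∀ x y : H, ‖⟪T x, S y⟫‖ = ‖⟪x, y⟫‖) {a b : H} :
    ⟪a, b⟫ = 0 ↔ ⟪T a, S b⟫ = 0 := by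
  have := h a b
  constructor
  · intro hz; rw [← norm_eq_zero, this, hz, norm_zero]
  · intro hz; rw [← norm_eq_zero, ← this, hz, norm_zero]

lemma aux_S_zero (h : ∀ x y : H, ‖⟪T x, S y⟫‖ = ‖⟪x, y⟫‖) (hS : AlmostSurjective S) :
    S 0 = 0 := by
  obtain ⟨w, c, hc, h0⟩ := hS 0
  have hc0 : c ≠ 0 := by intro hc0; simp [hc0] at hc
  have hSw : S w = 0 := by
    rcases smul_eq_zero.mp h0.symm with h1 | h1
    · exact absurd h1 hc0
    · exact h1
  have hw : w = 0 := by
    have h1 := h w w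
    rw [hSw, inner_zero_right, norm_zero] at h1
    exact inner_self_eq_zero.mp (norm_eq_zero.mp h1.symm)
  rw [hw] at hSw
  exact hSw

lemma aux_delta (h : ∀ x y : H, ‖⟪T x, S y⟫‖ = ‖⟪x, y⟫‖)
    (hunit : ∀ x : H, ‖x‖ = 1 → ⟪T x, S x⟫ = 1)
    {n : ℕ} {y : Fin n → H} (hy : Orthonormal ℂ y) (j k : Fin n) :
    ⟪T (y j), S (y k)⟫ = if j = k then 1 else 0 := by
  by_cases hjk : j = k
  · subst hjk; simp [hunit (y j) (hy.1 j)]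
  · simp only [hjk, if_false]
    exact (aux_orth h).mp (hy.2 hjk)

lemma aux_delta' (h : ∀ x y : H, ‖⟪T x, S y⟫‖ = ‖⟪x, y⟫‖)
    (hunit : ∀ x : H, ‖x‖ = 1 → ⟪T x, S x⟫ = 1)
    {n : ℕ} {y : Fin n → H} (hy : Orthonormal ℂ y) (j k : Fin n) :
    ⟪S (y j), T (y k)⟫ = if j = k then 1 else 0 := by
  have := aux_delta h hunit hy k j
  rw [← inner_conj_symm, this]
  by_cases hkj : k = j
  · subst hkj; simp
  · simp [hkj, Ne.symm hkj]

/-- Coefficient extraction. -/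
lemma aux_coeff (h : ∀ x y : H, ‖⟪T x, S y⟫‖ = ‖⟪x, y⟫‖)
    (hunit : ∀ x : H, ‖x‖ = 1 → ⟪T x, S x⟫ = 1)
    {n : ℕ} {y : Fin n → H} (hy : Orthonormal ℂ y) (c : Fin n → ℂ) (j : Fin n) :
    ⟪S (y j), ∑ k, c k • T (y k)⟫ = c j := by
  rw [inner_sum]
  have : ∀ k, ⟪S (y j), c k • T (y k)⟫ = if j = k then c j else 0 := by
    intro k
    rw [inner_smul_right, aux_delta' h hunit hy j k]
    by_cases hjk : j = k <;> simp [hjk]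
  simp only [this]
  simp

lemma aux_sum_apply {n : ℕ} (y : Fin n → H) (z : H) :
    (∑ k : Fin n, rankOne (T (y k)) (S (y k))) z = ∑ k, ⟪S (y k), z⟫ • T (y k) := by
  simp [LinearMap.sum_apply]

lemma aux_indep (h : ∀ x y : H, ‖⟪T x, S y⟫‖ = ‖⟪x, y⟫‖)
    (hunit : ∀ x : H, ‖x‖ = 1 → ⟪T x, S x⟫ = 1)
    {n : ℕ} {y : Fin n → H} (hy : Orthonormal ℂ y) :
    LinearIndependent ℂ (fun k => T (y k)) := by
  rw [Fintype.linearIndependent_iff]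
  intro c hc j
  have := aux_coeff h hunit hy c j
  rw [hc, inner_zero_right] at this
  exact this.symm

lemma aux_idem (h : ∀ x y : H, ‖⟪T x, S y⟫‖ = ‖⟪x, y⟫‖)
    (hunit : ∀ x : H, ‖x‖ = 1 → ⟪T x, S x⟫ = 1)
    {n : ℕ} {y : Fin n → H} (hy : Orthonormal ℂ y) :
    (∑ k : Fin n, rankOne (T (y k)) (S (y k))).comp
        (∑ k : Fin n, rankOne (T (y k)) (S (y k))) =
      (∑ k : Fin n, rankOne (T (y k)) (S (y k))) := by
  ext z
  rw [LinearMap.comp_apply, aux_sum_apply, aux_sum_apply y z]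
  calc ∑ j, ⟪S (y j), ∑ k, ⟪S (y k), z⟫ • T (y k)⟫ • T (y j)
      = ∑ j, ⟪S (y j), z⟫ • T (y j) := by
        refine Finset.sum_congr rfl fun j _ => ?_
        rw [aux_coeff h hunit hy _ j]

lemma aux_range (h : ∀ x y : H, ‖⟪T x, S y⟫‖ = ‖⟪x, y⟫‖)
    (hunit : ∀ x : H, ‖x‖ = 1 → ⟪T x, S x⟫ = 1)
    {n : ℕ} {y : Fin n → H} (hy : Orthonormal ℂ y) :
    LinearMap.range (∑ k : Fin n, rankOne (T (y k)) (S (y k))) =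
      Submodule.span ℂ (Set.range fun k => T (y k)) := by
  apply le_antisymm
  · rintro _ ⟨z, rfl⟩
    rw [aux_sum_apply]
    exact Submodule.sum_mem _ fun k _ =>
      Submodule.smul_mem _ _ (Submodule.subset_span ⟨k, rfl⟩)
  · rw [Submodule.span_le]
    rintro _ ⟨j, rfl⟩
    refine ⟨T (y j), ?_⟩
    rw [aux_sum_apply]
    have : ∀ k, ⟪S (y k), T (y j)⟫ • T (y k) = if k = j then T (y j) else 0 := by
      intro k
      rw [aux_delta' h hunit hy k j]
      by_cases hkj : k = j <;> simp [hkj]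
    simp only [this]
    simp

lemma aux_ker (h : ∀ x y : H, ‖⟪T x, S y⟫‖ = ‖⟪x, y⟫‖)
    (hunit : ∀ x : H, ‖x‖ = 1 → ⟪T x, S x⟫ = 1)
    {n : ℕ} {y : Fin n → H} (hy : Orthonormal ℂ y) :
    LinearMap.ker (∑ k : Fin n, rankOne (T (y k)) (S (y k))) =
      (Submodule.span ℂ (Set.range fun k => S (y k)))ᗮ := by
  ext z
  rw [LinearMap.mem_ker, aux_sum_apply, Submodule.mem_orthogonal]
  constructor
  · intro hz u hu
    have hco : ∀ j, ⟪S (y j), z⟫ = 0 := by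
      intro j
      have := aux_coeff h hunit hy (fun k => ⟪S (y k), z⟫) j
      rw [hz, inner_zero_right] at this
      exact this.symm
    induction hu using Submodule.span_induction with
    | mem v hv => obtain ⟨j, rfl⟩ := hv; exact hco j
    | zero => simp
    | add a b _ _ ha hb => rw [inner_add_left, ha, hb, add_zero]
    | smul c a _ ha => rw [inner_smul_left, ha, mul_zero]
  · intro hz
    have : ∀ j, ⟪S (y j), z⟫ = 0 := fun j =>
      hz _ (Submodule.subset_span ⟨j, rfl⟩)
    simp [this]

/-- If `u` lies in the span of the orthonormal system, then `T u` lies in the span of the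
images `T (y k)`. -/
lemma aux_T_mem (h : ∀ x y : H, ‖⟪T x, S y⟫‖ = ‖⟪x, y⟫‖)
    (hunit : ∀ x : H, ‖x‖ = 1 → ⟪T x, S x⟫ = 1) (hS : AlmostSurjective S)
    {n : ℕ} {y : Fin n → H} (hy : Orthonormal ℂ y)
    {u : H} (hu : u ∈ Submodule.span ℂ (Set.range y)) :
    T u ∈ Submodule.span ℂ (Set.range fun k => T (y k)) := by
  set K := Submodule.span ℂ (Set.range fun k => T (y k)) with hK
  haveI : FiniteDimensional ℂ K :=
    FiniteDimensional.span_of_finite ℂ (Set.finite_range _)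
  rw [← Submodule.orthogonal_orthogonal K, Submodule.mem_orthogonal]
  intro z hz
  -- z is orthogonal to every T (y k)
  have hzk : ∀ k, ⟪T (y k), z⟫ = 0 := fun k =>
    hz _ (Submodule.subset_span ⟨k, rfl⟩)
  obtain ⟨w, c, hc, hzw⟩ := hS z
  have hc0 : c ≠ 0 := by intro hc0; simp [hc0] at hc
  have hwk : ∀ k, ⟪y k, w⟫ = 0 := by
    intro k
    have := hzk k
    rw [hzw, inner_smul_right, mul_eq_zero] at this
    rcases this with h1 | h1
    · exact absurd h1 hc0
    · exact (aux_orth h).mpr h1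
  have huw : ⟪u, w⟫ = 0 := by
    induction hu using Submodule.span_induction with
    | mem v hv => obtain ⟨k, rfl⟩ := hv; exact hwk k
    | zero => simp
    | add a b _ _ ha hb => rw [inner_add_left, ha, hb, add_zero]
    | smul c a _ ha => rw [inner_smul_left, ha, mul_zero]
  have : ⟪T u, z⟫ = 0 := by
    rw [hzw, inner_smul_right, (aux_orth h).mp huw, mul_zero]
  rw [← inner_conj_symm, this, map_zero]

/-- If `w` lies in the span of the orthonormal system, then `S w` lies in the span of the
images `S (y k)`. -/
lemma aux_S_mem (h : ∀ x y : H, ‖⟪T x, S y⟫‖ = ‖⟪x, y⟫‖)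
    (hunit : ∀ x : H, ‖x‖ = 1 → ⟪T x, S x⟫ = 1) (hS : AlmostSurjective S)
    {n : ℕ} {y : Fin n → H} (hy : Orthonormal ℂ y)
    {w : H} (hw : w ∈ Submodule.span ℂ (Set.range y)) :
    S w ∈ Submodule.span ℂ (Set.range fun k => S (y k)) := by
  set M := Submodule.span ℂ (Set.range y) with hM
  haveI : FiniteDimensional ℂ M :=
    FiniteDimensional.span_of_finite ℂ (Set.finite_range _)
  set v₂ := S w - ∑ k, ⟪T (y k), S w⟫ • S (y k) with hv₂
  -- v₂ is orthogonal to every T (y j)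
  have hv1 : ∀ j, ⟪T (y j), v₂⟫ = 0 := by
    intro j
    rw [hv₂, inner_sub_right, inner_sum]
    have : ∀ k, ⟪T (y j), ⟪T (y k), S w⟫ • S (y k)⟫ =
        if j = k then ⟪T (y j), S w⟫ else 0 := by
      intro k
      rw [inner_smul_right, aux_delta h hunit hy j k]
      by_cases hjk : j = k
      · subst hjk; simp
      · simp [hjk]
    simp only [this]
    simp
  obtain ⟨w', c, hc, hv2⟩ := hS v₂
  have hc0 : c ≠ 0 := by intro hc0; simp [hc0] at hc
  -- ⟪T u, v₂⟫ = 0 for u ∈ Mᗮ, hence w' ∈ M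
  have hw' : w' ∈ M := by
    rw [← Submodule.orthogonal_orthogonal M]
    rw [Submodule.mem_orthogonal]
    intro u hu
    have hperp : ∀ v ∈ M, ⟪u, v⟫ = 0 := by
      intro v hv
      rw [← inner_conj_symm, (Submodule.mem_orthogonal M u).mp hu v hv, map_zero]
    have huv₂ : ⟪T u, v₂⟫ = 0 := by
      rw [hv₂, inner_sub_right, inner_sum]
      have h1 : ⟪T u, S w⟫ = 0 := (aux_orth h).mp (hperp w hw)
      have h2 : ∀ k, ⟪T u, ⟪T (y k), S w⟫ • S (y k)⟫ = 0 := by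
        intro k
        rw [inner_smul_right,
          (aux_orth h).mp (hperp (y k) (Submodule.subset_span ⟨k, rfl⟩)), mul_zero]
      simp only [h2, h1]
      simp
    rw [hv2, inner_smul_right, mul_eq_zero] at huv₂
    rcases huv₂ with h1 | h1
    · exact absurd h1 hc0
    · exact (aux_orth h).mpr h1
  -- w' = 0
  have hw'0 : w' = 0 := by
    by_contra hne
    have hTw' : T w' ∈ Submodule.span ℂ (Set.range fun k => T (y k)) :=
      aux_T_mem h hunit hS hy hw'
    have horthspan : ∀ v ∈ Submodule.span ℂ (Set.range fun k => T (y k)),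
        ⟪v, v₂⟫ = 0 := by
      intro v hv
      induction hv using Submodule.span_induction with
      | mem v hv => obtain ⟨j, rfl⟩ := hv; exact hv1 j
      | zero => simp
      | add a b _ _ ha hb => rw [inner_add_left, ha, hb, add_zero]
      | smul c a _ ha => rw [inner_smul_left, ha, mul_zero]
    have horth := horthspan _ hTw'
    rw [hv2, inner_smul_right, mul_eq_zero] at horth
    rcases horth with h1 | h1
    · exact hc0 h1
    · have : ⟪w', w'⟫ = 0 := by
        rw [← norm_eq_zero, ← h w' w', h1, norm_zero]
      exact hne (inner_self_eq_zero.mp this)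
  have hv₂0 : v₂ = 0 := by
    rw [hv2, hw'0, aux_S_zero h hS, smul_zero]
  have : S w = ∑ k, ⟪T (y k), S w⟫ • S (y k) := by
    have := sub_eq_zero.mp hv₂0
    exact this
  rw [this]
  exact Submodule.sum_mem _ fun k _ =>
    Submodule.smul_mem _ _ (Submodule.subset_span ⟨k, rfl⟩)

end Aux

theorem measure_well_defined
    {H : Type*} [NormedAddCommGroup H] [InnerProductSpace ℂ H] [CompleteSpace H]
    (T S : H → H)
    (h : ∀ x y : H, ‖⟪T x, S y⟫‖ = ‖⟪x, y⟫‖)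
    (hunit : ∀ x : H, ‖x‖ = 1 → ⟪T x, S x⟫ = 1)
    (hS : AlmostSurjective S)
    (n : ℕ) (x x' : Fin n → H)
    (hx : Orthonormal ℂ x) (hx' : Orthonormal ℂ x')
    (hspan : Submodule.span ℂ (Set.range x) = Submodule.span ℂ (Set.range x')) :
    (∑ k : Fin n, rankOne (T (x k)) (S (x k))) =
      (∑ k : Fin n, rankOne (T (x' k)) (S (x' k))) ∧
    (∑ k : Fin n, rankOne (T (x k)) (S (x k))).comp
        (∑ k : Fin n, rankOne (T (x k)) (S (x k))) =
      (∑ k : Fin n, rankOne (T (x k)) (S (x k))) ∧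
    Module.finrank ℂ
        (LinearMap.range (∑ k : Fin n, rankOne (T (x k)) (S (x k)))) = n ∧
    LinearMap.range (∑ k : Fin n, rankOne (T (x k)) (S (x k))) =
      Submodule.span ℂ (Set.range fun k => T (x k)) ∧
    LinearMap.ker (∑ k : Fin n, rankOne (T (x k)) (S (x k))) =
      (Submodule.span ℂ (Set.range fun k => S (x k)))ᗮ := by
  set P := ∑ k : Fin n, rankOne (T (x k)) (S (x k)) with hP
  set P' := ∑ k : Fin n, rankOne (T (x' k)) (S (x' k)) with hP'
  have hidem : P.comp P = P := aux_idem h hunit hx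
  have hidem' : P'.comp P' = P' := aux_idem h hunit hx'
  have hrange : LinearMap.range P = Submodule.span ℂ (Set.range fun k => T (x k)) :=
    aux_range h hunit hx
  have hrange' : LinearMap.range P' = Submodule.span ℂ (Set.range fun k => T (x' k)) :=
    aux_range h hunit hx'
  have hker : LinearMap.ker P = (Submodule.span ℂ (Set.range fun k => S (x k)))ᗮ :=
    aux_ker h hunit hx
  have hker' : LinearMap.ker P' = (Submodule.span ℂ (Set.range fun k => S (x' k)))ᗮ :=
    aux_ker h hunit hx'
  -- span of T images coincide
  have hTspan : Submodule.span ℂ (Set.range fun k => T (x k)) =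
      Submodule.span ℂ (Set.range fun k => T (x' k)) := by
    apply le_antisymm
    · rw [Submodule.span_le]
      rintro _ ⟨j, rfl⟩
      exact aux_T_mem h hunit hS hx' (hspan ▸ Submodule.subset_span ⟨j, rfl⟩)
    · rw [Submodule.span_le]
      rintro _ ⟨j, rfl⟩
      exact aux_T_mem h hunit hS hx (hspan ▸ Submodule.subset_span ⟨j, rfl⟩)
  -- span of S images coincide
  have hSspan : Submodule.span ℂ (Set.range fun k => S (x k)) =
      Submodule.span ℂ (Set.range fun k => S (x' k)) := by
    apply le_antisymm
    · rw [Submodule.span_le]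
      rintro _ ⟨j, rfl⟩
      exact aux_S_mem h hunit hS hx' (hspan ▸ Submodule.subset_span ⟨j, rfl⟩)
    · rw [Submodule.span_le]
      rintro _ ⟨j, rfl⟩
      exact aux_S_mem h hunit hS hx (hspan ▸ Submodule.subset_span ⟨j, rfl⟩)
  have hfix : ∀ v ∈ LinearMap.range P, P v = v := by
    rintro _ ⟨u, rfl⟩
    have := congrArg (fun f => f u) hidem
    simpa using this
  have hmain : P = P' := by
    ext z
    have h1 : P' z ∈ LinearMap.range P := by
      rw [hrange, hTspan, ← hrange']
      exact ⟨z, rfl⟩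
    have h2 : z - P' z ∈ LinearMap.ker P := by
      rw [hker, hSspan, ← hker', LinearMap.mem_ker, map_sub]
      have := congrArg (fun f => f z) hidem'
      simp only [LinearMap.comp_apply] at this
      rw [this, sub_self]
    have h3 : P (z - P' z) = 0 := h2
    calc P z = P (z - P' z) + P (P' z) := by rw [← map_add, sub_add_cancel]
      _ = 0 + P' z := by rw [h3, hfix _ h1]
      _ = P' z := by rw [zero_add]
  refine ⟨hmain, hidem, ?_, hrange, hker⟩
  rw [hrange, finrank_span_eq_card (aux_indep h hunit hx)]
  simp
end
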